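/- arXiv:1501.03264 — 2 statements merged into one kernel-verified Lean document; each statement's English description precedes it below -/
import Mathlib

section
/- Let S be a finite set partitioned into nonempty blocks S₁, …, S_n with distinguished elements m_i ∈ S_i. Let Π₀ be the set of permutations π of S such that for each block S_i and each x ∈ S_i \ {m_i}, π(x) ∈ {x, T(x)} for a fixed map T with the property that iterating T from any point of S_i reaches m_i while staying inside S_i (and T(m_i) = m_i). Then for every vector (y₁,…,y_n) with y_i ∈ S_i and every permutation σ of {1,…,n}, there exists π ∈ Π₀ with π(m_i) = y_{σ(i)} for all i. -/
/-!
Let `k j` be the number of `T`-steps from `y j` to `m j`. The points `T^[t] (y j)`, `t ≤ k j`,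
are pairwise distinct: within a path by assumption, across paths because the blocks are
disjoint. Rotating each path one step along `T` (sending `m j` back to `y j`) is therefore a
permutation of `S` in `Π₀`, and precomposing it with the permutation `m i ↦ m (σ i)` of the
distinguished points sends `m i` to `y (σ i)`.
-/

open Equiv Function

section PathRotation

variable {α ι : Type*} (T : α → α) (y : ι → α) (k : ι → ℕ)

def pathPoint (p : Σ j, Fin (k j + 1)) : α := T^[p.2] (y p.1)

variable {T y k}

theorem injective_pathPoint {B : ι → Set α} (hB : ∀ j t, T^[t] (y j) ∈ B j)
    (hdisj : ∀ x i j, x ∈ B i → x ∈ B j → i = j)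
    (hnodup : ∀ j a b, a < b → b ≤ k j → T^[a] (y j) ≠ T^[b] (y j)) :
    Injective (pathPoint T y k) := by
  rintro ⟨i, a⟩ ⟨j, b⟩ (h : T^[a] (y i) = T^[b] (y j))
  obtain rfl : i = j := hdisj _ i j (hB i a) (h ▸ hB j b)
  have ha := a.is_le
  have hb := b.is_le
  congr
  ext
  rcases lt_trichotomy (a : ℕ) b with hab | hab | hab
  · exact absurd h (hnodup i a b hab hb)
  · exact hab
  · exact absurd h.symm (hnodup i b a hab ha)

open scoped Classical in
/-- Moves every point of each path `y j, T (y j), …, T^[k j] (y j)` one step along `T`,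
sends the endpoint back to `y j`, and fixes everything off the paths. -/
noncomputable def rotatePaths (h : Injective (pathPoint T y k)) : Perm α :=
  (Perm.sigmaCongrRight fun j => finRotate (k j + 1)).extendDomain (ofInjective _ h)

variable (h : Injective (pathPoint T y k))

theorem rotatePaths_pathPoint (p : Σ j, Fin (k j + 1)) :
    rotatePaths h (pathPoint T y k p) =
      pathPoint T y k ⟨p.1, finRotate (k p.1 + 1) p.2⟩ := by
  classical
  have := Perm.extendDomain_apply_image
    (Perm.sigmaCongrRight fun j => finRotate (k j + 1)) (ofInjective _ h) p
  simpa [rotatePaths, ofInjective_apply] using this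

theorem rotatePaths_iterate_of_lt {j : ι} {t : ℕ} (ht : t < k j) :
    rotatePaths h (T^[t] (y j)) = T (T^[t] (y j)) := by
  have hne : (⟨t, by omega⟩ : Fin (k j + 1)) ≠ Fin.last (k j) := Fin.ne_of_lt ht
  have hrot := rotatePaths_pathPoint h ⟨j, ⟨t, by omega⟩⟩
  simp only [pathPoint] at hrot
  rw [hrot, coe_finRotate_of_ne_last hne, iterate_succ_apply']

theorem rotatePaths_iterate_self (j : ι) : rotatePaths h (T^[k j] (y j)) = y j := by
  simpa [pathPoint, finRotate_last] using rotatePaths_pathPoint h ⟨j, Fin.last (k j)⟩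

theorem rotatePaths_of_notMem_range {x : α} (hx : x ∉ Set.range (pathPoint T y k)) :
    rotatePaths h x = x := by
  classical
  exact Perm.extendDomain_apply_not_subtype _ _ hx

theorem rotatePaths_eq_self_or_eq_apply {x : α} (hx : ∀ j, x ≠ T^[k j] (y j)) :
    rotatePaths h x = x ∨ rotatePaths h x = T x := by
  by_cases hrange : x ∈ Set.range (pathPoint T y k)
  · obtain ⟨⟨j, t⟩, rfl⟩ := hrange
    have ht : (t : ℕ) < k j := lt_of_le_of_ne t.is_le fun he => hx j (by simp [pathPoint, he])
    exact .inr (rotatePaths_iterate_of_lt h ht)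
  · exact .inl (rotatePaths_of_notMem_range h hrange)

end PathRotation

theorem stmt15_general {α : Type*} {n : ℕ}
    (B : Fin n → Finset α) (m : Fin n → α)
    (hpart : ∀ x : α, ∃! i, x ∈ B i)
    (hm : ∀ i, m i ∈ B i)
    (T : α → α)
    (hTB : ∀ i, ∀ x ∈ B i, T x ∈ B i)
    (horb : ∀ i, ∀ x ∈ B i, ∃ k : ℕ, T^[k] x = m i ∧
      ∀ j l, j < l → l ≤ k → T^[j] x ≠ T^[l] x)
    (y : Fin n → α) (hy : ∀ i, y i ∈ B i) (σ : Equiv.Perm (Fin n)) :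
    ∃ π : Equiv.Perm α,
      (∀ x, (∀ i, x ≠ m i) → π x = x ∨ π x = T x) ∧
      ∀ i, π (m i) = y (σ i) := by
  classical
  have hdisj : ∀ x i j, x ∈ B i → x ∈ B j → i = j := fun x _ _ => (hpart x).unique
  have hpath : ∀ j t, T^[t] (y j) ∈ B j := fun j t =>
    Set.MapsTo.iterate (fun x hx => hTB j x hx) t (hy j)
  choose k hk hnodup using fun j => horb j (y j) (hy j)
  let ρ := rotatePaths (injective_pathPoint (B := fun i => B i) hpath hdisj hnodup)
  have hm_inj : Injective m := fun i j hij => hdisj _ i j (hm i) (hij ▸ hm j)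
  let μ := σ.extendDomain (ofInjective m hm_inj)
  refine ⟨ρ * μ, fun x hx => ?_, fun i => ?_⟩
  · have hμx : μ x = x :=
      Perm.extendDomain_apply_not_subtype _ _ (by rintro ⟨i, rfl⟩; exact hx i rfl)
    rw [Perm.mul_apply, hμx]
    exact rotatePaths_eq_self_or_eq_apply _ fun j => hk j ▸ hx j
  · have hμm : μ (m i) = m (σ i) := by
      simpa using Perm.extendDomain_apply_image σ (ofInjective m hm_inj) i
    rw [Perm.mul_apply, hμm, ← hk, rotatePaths_iterate_self]

/-- in the block partition setting, for every choice of targets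
yᵢ ∈ Sᵢ and every permutation σ of the block indices there is a permutation
π ∈ Π₀ (i.e. π(x) ∈ {x, T(x)} off the distinguished points) with
π(mᵢ) = y_{σ(i)} for all i. -/
theorem stmt15 {α : Type*} [Fintype α] [DecidableEq α] {n : ℕ}
    (B : Fin n → Finset α) (m : Fin n → α)
    (hpart : ∀ x : α, ∃! i, x ∈ B i)
    (hm : ∀ i, m i ∈ B i)
    (T : α → α)
    (hTB : ∀ i, ∀ x ∈ B i, T x ∈ B i)
    (hTm : ∀ i, T (m i) = m i)
    (hTfix : ∀ x, (∀ i, x ≠ m i) → T x ≠ x)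
    (horb : ∀ i, ∀ x ∈ B i, ∃ k : ℕ, T^[k] x = m i ∧
      ∀ j l, j < l → l ≤ k → T^[j] x ≠ T^[l] x)
    (y : Fin n → α) (hy : ∀ i, y i ∈ B i) (σ : Equiv.Perm (Fin n)) :
    ∃ π : Equiv.Perm α,
      (∀ x, (∀ i, x ≠ m i) → π x = x ∨ π x = T x) ∧
      ∀ i, π (m i) = y (σ i) :=
  stmt15_general B m hpart hm T hTB horb y hy σ
end

section
/- In the setting of the block partition and the set Π₀ of permutations: for every permutation σ of {1,…,n} and every π ∈ Π₀ with π(m_i) ∈ S_{σ(i)} for all i, one has sgn(σ)·(-1)^{N-n} = sgn(π)·(-1)^{f(π)}, where N = |S| and f(π) is the number of fixed points of π in S \ {m₁,…,m_n}. -/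
/-!
Every unmarked point moved by `π` is sent to its `T`-successor. Since the `T`-orbit of an
unmarked point ends at a fixed marked point, `T` has no periodic unmarked points, so some
moved unmarked point `π (m j)` is entered from a marked point. Multiplying `π` on the right by
the transposition of `m j` and `π (m j)` flips the sign, keeps every `π (m i)` in the block
`B (σ i)` and fixes one more unmarked point. Once all unmarked points are fixed, `π` permutes
the marked points as `σ` permutes the blocks. Hence `sgn π = sgn σ · (-1)^d` with `d` the number
of moved unmarked points, and `d + f(π) = N - n`.
-/

open Equiv Finset Function

theorem Function.IsPeriodicPt.eq_of_iterate_eq_of_isFixedPt {α : Type*} {f : α → α}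
    {x y : α} {p k : ℕ} (hx : IsPeriodicPt f p x) (hp : 0 < p) (hy : IsFixedPt f y)
    (hk : f^[k] x = y) : x = y :=
  (hx.iterate k).eq_of_apply_eq_same ((hy.iterate k).isPeriodicPt p) hp
    (by rw [hk, (hy.iterate k).eq])

namespace Equiv.Perm

variable {α : Type*}

theorem exists_not_pred_apply_moved [Finite α] {P : α → Prop} {T : α → α} {π : Perm α}
    (hπ : ∀ x, P x → π x = x ∨ π x = T x)
    (hT : ∀ x, P x → ∀ p, 0 < p → ¬IsPeriodicPt T p x)
    {x₀ : α} (hx₀ : P x₀) (hmoved : π x₀ ≠ x₀) :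
    ∃ y, ¬P y ∧ P (π y) ∧ π (π y) ≠ π y := by
  by_contra! h
  have back : ∀ x, P x → π x ≠ x → P (π⁻¹ x) ∧ π (π⁻¹ x) ≠ π⁻¹ x ∧ T (π⁻¹ x) = x := by
    intro x hx hxm
    have hy : π (π⁻¹ x) = x := π.apply_symm_apply x
    have hP : P (π⁻¹ x) := by
      by_contra hP
      exact hxm (by simpa [hy] using h _ hP (by rwa [hy]))
    have hne : π (π⁻¹ x) ≠ π⁻¹ x := fun he => hxm (by rwa [← he.symm.trans hy])
    exact ⟨hP, hne, ((hπ _ hP).resolve_left hne).symm.trans hy⟩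
  -- `π⁻¹` walks backwards along `T` and returns to `x₀`, closing a `T`-cycle through `x₀`.
  have walk : ∀ t, P ((π⁻¹ ^ t) x₀) ∧ π ((π⁻¹ ^ t) x₀) ≠ (π⁻¹ ^ t) x₀ ∧
      T^[t] ((π⁻¹ ^ t) x₀) = x₀ := by
    intro t
    induction t with
    | zero => exact ⟨hx₀, hmoved, rfl⟩
    | succ t ih =>
      rw [pow_succ', mul_apply]
      obtain ⟨hP, hne, hT⟩ := back _ ih.1 ih.2.1
      exact ⟨hP, hne, by rw [iterate_succ_apply, hT, ih.2.2]⟩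
  have := (walk (orderOf π⁻¹)).2.2
  rw [pow_orderOf_eq_one, one_apply] at this
  exact hT x₀ hx₀ _ (orderOf_pos _) this

theorem sign_mul_swap_apply_self [Fintype α] [DecidableEq α] (π : Perm α) {y : α}
    (hy : π y ≠ y) : sign (π * swap y (π y)) = -sign π := by
  rw [sign_mul, sign_swap hy.symm, mul_neg_one]

theorem filter_support_mul_swap_apply_self [Fintype α] [DecidableEq α] (π : Perm α)
    {P : α → Prop} [DecidablePred P] {y : α} (hy : ¬P y) :
    (π * swap y (π y)).support.filter P = (π.support.filter P).erase (π y) := by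
  ext a
  simp only [mem_filter, mem_erase, mem_support, mul_apply]
  by_cases hay : a = y
  · subst hay
    simp [hy]
  by_cases hapy : a = π y
  · subst hapy
    simp
  · rw [swap_apply_of_ne_of_ne hay hapy]
    tauto

theorem card_filter_fixed_add_card_filter_support [Fintype α] [DecidableEq α] (π : Perm α)
    (P : α → Prop) [DecidablePred P] :
    #(univ.filter fun x => π x = x ∧ P x) + #(π.support.filter P) = #(univ.filter P) := by
  rw [← card_filter_add_card_filter_not (s := univ.filter P) (fun x => π x = x),
    filter_filter, filter_filter]
  congr 2 <;> ext x <;> simp [and_comm]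

theorem eq_viaFintypeEmbedding [Fintype α] [DecidableEq α] {ι : Type*} [Fintype ι]
    (e : ι ↪ α) (σ : Perm ι) {π : Perm α} (he : ∀ i, π (e i) = e (σ i))
    (hfix : ∀ a ∉ Set.range e, π a = a) : π = σ.viaFintypeEmbedding e := by
  ext a
  by_cases ha : a ∈ Set.range e
  · obtain ⟨i, rfl⟩ := ha
    rw [he, viaFintypeEmbedding_apply_image]
  · rw [hfix a ha, viaFintypeEmbedding_apply_notMem_range _ _ ha]

end Equiv.Perm

theorem card_filter_forall_ne_of_injective {α ι : Type*} [Fintype α] [DecidableEq α]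
    [Fintype ι] {m : ι → α} [DecidablePred fun x => ∀ i, x ≠ m i] (hm : Injective m) :
    #(univ.filter fun x => ∀ i, x ≠ m i) = Fintype.card α - Fintype.card ι := by
  have : (univ.filter fun x => ∀ i, x ≠ m i) = (univ.image m)ᶜ := by
    ext x
    simp [eq_comm]
  rw [this, card_compl, card_image_of_injective _ hm, card_univ]

section Blocks

open Equiv.Perm

variable {α : Type*} [Fintype α] [DecidableEq α] {n : ℕ} {B : Fin n → Finset α}
  {m : Fin n → α}

theorem sign_eq_of_forall_unmarked_fixed (hpart : ∀ x : α, ∃! i, x ∈ B i)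
    (hm : ∀ i, m i ∈ B i) (hminj : Injective m) {π : Perm α} {σ : Perm (Fin n)}
    (hσ : ∀ i, π (m i) ∈ B (σ i)) (hfix : ∀ x, (∀ i, x ≠ m i) → π x = x) :
    sign π = sign σ := by
  have hπm : ∀ i, π (m i) = m (σ i) := by
    intro i
    obtain ⟨k, hk⟩ : ∃ k, π (m i) = m k := by
      by_contra! h
      exact h i (π.injective (hfix _ h))
    rw [hk, (hpart (m k)).unique (hm k) (hk ▸ hσ i)]
  rw [eq_viaFintypeEmbedding ⟨m, hminj⟩ σ hπm fun a ha => hfix a fun i hi => ha ⟨i, hi.symm⟩,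
    viaFintypeEmbedding_sign]

theorem sign_eq_sign_mul_neg_one_pow_card_moved (hpart : ∀ x : α, ∃! i, x ∈ B i)
    (hm : ∀ i, m i ∈ B i) (hminj : Injective m) {T : α → α}
    (hTB : ∀ i, ∀ x ∈ B i, T x ∈ B i)
    (hT : ∀ x, (∀ i, x ≠ m i) → ∀ p, 0 < p → ¬IsPeriodicPt T p x) {σ : Perm (Fin n)}
    {π : Perm α} (hπ : ∀ x, (∀ i, x ≠ m i) → π x = x ∨ π x = T x)
    (hσ : ∀ i, π (m i) ∈ B (σ i)) :
    sign π = sign σ * (-1) ^ #(π.support.filter fun x => ∀ i, x ≠ m i) := by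
  induction hd : #(π.support.filter fun x => ∀ i, x ≠ m i) generalizing π with
  | zero =>
    rw [pow_zero, mul_one]
    refine sign_eq_of_forall_unmarked_fixed hpart hm hminj hσ fun x hx => ?_
    by_contra hmoved
    exact (filter_eq_empty_iff.mp (card_eq_zero.mp hd)) (Perm.mem_support.mpr hmoved) hx
  | succ d ih =>
    obtain ⟨x₀, hx₀⟩ := card_pos.mp (by rw [hd]; exact d.succ_pos)
    rw [mem_filter, Perm.mem_support] at hx₀
    obtain ⟨y, hy, hπy, hππy⟩ := exists_not_pred_apply_moved hπ hT hx₀.2 hx₀.1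
    obtain ⟨j, rfl⟩ : ∃ j, y = m j := by simpa using hy
    set π' := π * swap (m j) (π (m j))
    have hπ'_of_ne : ∀ a, a ≠ m j → a ≠ π (m j) → π' a = π a := fun a h₁ h₂ => by
      rw [mul_apply, swap_apply_of_ne_of_ne h₁ h₂]
    have hπ' : ∀ x, (∀ i, x ≠ m i) → π' x = x ∨ π' x = T x := by
      intro x hx
      by_cases hxj : x = π (m j)
      · left
        simp [π', hxj]
      · rw [hπ'_of_ne x (hx j) hxj]
        exact hπ x hx
    have hσ' : ∀ i, π' (m i) ∈ B (σ i) := by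
      intro i
      by_cases hij : i = j
      · subst hij
        have hT_step : π (π (m i)) = T (π (m i)) := (hπ _ hπy).resolve_left hππy
        simpa [π', hT_step] using hTB _ _ (hσ i)
      · rw [hπ'_of_ne _ (hminj.ne hij) fun h => hπy i h.symm]
        exact hσ i
    have hd' : #(π'.support.filter fun x => ∀ i, x ≠ m i) = d := by
      rw [filter_support_mul_swap_apply_self _ hy,
        card_erase_of_mem (mem_filter.mpr ⟨Perm.mem_support.mpr hππy, hπy⟩), hd,
        Nat.add_sub_cancel]
    have hsign := ih hπ' hσ' hd'
    rw [sign_mul_swap_apply_self π (hπy j)] at hsign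
    rw [pow_succ, ← mul_assoc, ← hsign, mul_neg_one, neg_neg]

end Blocks

theorem stmt16_general {α : Type*} [Fintype α] [DecidableEq α] {n : ℕ}
    (B : Fin n → Finset α) (m : Fin n → α)
    (hpart : ∀ x : α, ∃! i, x ∈ B i)
    (hm : ∀ i, m i ∈ B i)
    (hminj : Function.Injective m)
    (T : α → α)
    (hTB : ∀ i, ∀ x ∈ B i, T x ∈ B i)
    (hTm : ∀ i, T (m i) = m i)
    (horb : ∀ i, ∀ x ∈ B i, ∃ k : ℕ, T^[k] x = m i ∧
      ∀ j l, j < l → l ≤ k → T^[j] x ≠ T^[l] x)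
    (π : Equiv.Perm α)
    (hπ : ∀ x, (∀ i, x ≠ m i) → π x = x ∨ π x = T x)
    (σ : Equiv.Perm (Fin n)) (hσ : ∀ i, π (m i) ∈ B (σ i)) :
    Equiv.Perm.sign σ * (-1 : ℤˣ) ^ (Fintype.card α - n)
      = Equiv.Perm.sign π *
        (-1 : ℤˣ) ^ ((Finset.univ.filter fun x => π x = x ∧ ∀ i, x ≠ m i).card) := by
  have hT : ∀ x, (∀ i, x ≠ m i) → ∀ p, 0 < p → ¬IsPeriodicPt T p x := by
    intro x hx p hp hper
    obtain ⟨i, hi, -⟩ := hpart x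
    obtain ⟨k, hk, -⟩ := horb i x hi
    exact hx i (hper.eq_of_iterate_eq_of_isFixedPt hp (hTm i) hk)
  have hsign := sign_eq_sign_mul_neg_one_pow_card_moved hpart hm hminj hTB hT hπ hσ
  rw [hsign, mul_assoc, ← pow_add, add_comm, Perm.card_filter_fixed_add_card_filter_support,
    card_filter_forall_ne_of_injective hminj, Fintype.card_fin]

/-- in the block partition setting, for every σ ∈ S_n and every
π ∈ Π₀ with π(mᵢ) ∈ S_{σ(i)} for all i, one has
sgn(σ)·(-1)^{N-n} = sgn(π)·(-1)^{f(π)}, where N = |S| and f(π) is the number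
of fixed points of π outside {m₁,…,m_n}. -/
theorem stmt16 {α : Type*} [Fintype α] [DecidableEq α] {n : ℕ}
    (B : Fin n → Finset α) (m : Fin n → α)
    (hpart : ∀ x : α, ∃! i, x ∈ B i)
    (hm : ∀ i, m i ∈ B i)
    (hminj : Function.Injective m)
    (T : α → α)
    (hTB : ∀ i, ∀ x ∈ B i, T x ∈ B i)
    (hTm : ∀ i, T (m i) = m i)
    (hTfix : ∀ x, (∀ i, x ≠ m i) → T x ≠ x)
    (horb : ∀ i, ∀ x ∈ B i, ∃ k : ℕ, T^[k] x = m i ∧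
      ∀ j l, j < l → l ≤ k → T^[j] x ≠ T^[l] x)
    (π : Equiv.Perm α)
    (hπ : ∀ x, (∀ i, x ≠ m i) → π x = x ∨ π x = T x)
    (σ : Equiv.Perm (Fin n)) (hσ : ∀ i, π (m i) ∈ B (σ i)) :
    Equiv.Perm.sign σ * (-1 : ℤˣ) ^ (Fintype.card α - n)
      = Equiv.Perm.sign π *
        (-1 : ℤˣ) ^ ((Finset.univ.filter fun x => π x = x ∧ ∀ i, x ≠ m i).card) :=
  stmt16_general B m hpart hm hminj T hTB hTm horb π hπ σ hσ
end
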